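/- arXiv:1506.04599 — 2 statements merged into one kernel-verified Lean document; each statement's English description precedes it below -/
import Mathlib

section
/- Let p be a probability density on ℝ that is an even function with finite first moment, with cdf P, and let K_n = n ∫ x P(x)^{n-1} p(x) dx be the expected maximum of n i.i.d. samples. Then K_3 = (3/2)·K_2. -/
open MeasureTheory

/-- For any even probability density `p` with finite first moment, the expected maxima satisfy
`K₃ = (3/2) K₂`, where `K_n = n ∫ x P(x)^{n-1} p(x) dx` and `P` is the cdf of `p`. -/
theorem K3_eq_threehalves_K2_even_density
    (p P : ℝ → ℝ) (hmeas : Measurable p) (hnonneg : ∀ x, 0 ≤ p x)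
    (heven : ∀ x, p (-x) = p x) (hnorm : ∫ x, p x = 1)
    (hmom : Integrable (fun x => x * p x))
    (hP : ∀ x, P x = ∫ t in Set.Iic x, p t) :
    (3 : ℝ) * ∫ x, x * P x ^ 2 * p x = 3 / 2 * (2 * ∫ x, x * P x * p x) := by
  have hpint : Integrable p := by
    by_contra h
    rw [integral_undef h] at hnorm; norm_num at hnorm
  have hP0 : ∀ x, 0 ≤ P x := fun x => by
    rw [hP]; exact setIntegral_nonneg measurableSet_Iic fun t _ => hnonneg t
  have hP1 : ∀ x, P x ≤ 1 := fun x => by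
    rw [hP, ← hnorm]
    exact setIntegral_le_integral hpint (Filter.Eventually.of_forall hnonneg)
  have hPmono : Monotone P := fun a b hab => by
    rw [hP, hP]
    exact setIntegral_mono_set hpint.integrableOn
      (Filter.Eventually.of_forall hnonneg)
      (HasSubset.Subset.eventuallyLE (Set.Iic_subset_Iic.mpr hab))
  have hPmeas : Measurable P := hPmono.measurable
  have hPneg : ∀ x, P (-x) = 1 - P x := by
    intro x
    have h1 : ∫ t in Set.Ioi x, p (-t) = ∫ t in Set.Iic (-x), p t :=
      integral_comp_neg_Ioi x p
    have h2 : ∫ t in Set.Ioi x, p (-t) = ∫ t in Set.Ioi x, p t := by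
      simp only [heven]
    have h3 : (∫ t in Set.Iic x, p t) + ∫ t in Set.Ioi x, p t = ∫ t, p t := by
      have := integral_add_compl (s := Set.Iic x) measurableSet_Iic hpint (f := p)
      rwa [Set.compl_Iic] at this
    rw [hP, hP, ← h1, h2]
    linarith [h3.trans hnorm]
  have hbound : ∀ (k : ℕ) (x : ℝ), ‖x * P x ^ k * p x‖ ≤ ‖x * p x‖ := by
    intro k x
    rw [norm_mul, norm_mul, norm_mul]
    have h1 : ‖P x ^ k‖ ≤ 1 := by
      rw [Real.norm_eq_abs, abs_pow, abs_of_nonneg (hP0 x)]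
      exact pow_le_one₀ (hP0 x) (hP1 x)
    calc ‖x‖ * ‖P x ^ k‖ * ‖p x‖ ≤ ‖x‖ * 1 * ‖p x‖ := by
          gcongr
      _ = ‖x‖ * ‖p x‖ := by ring
  have hi : ∀ k : ℕ, Integrable (fun x => x * P x ^ k * p x) := fun k =>
    hmom.mono
      (((measurable_id.mul (hPmeas.pow_const k)).mul hmeas).aestronglyMeasurable)
      (Filter.Eventually.of_forall (hbound k))
  have hi2 := hi 2
  have hi1' : Integrable (fun x => x * P x * p x) := by
    have := hi 1; simpa using this
  have hodd : ∫ x, x * (P x ^ 2 - P x) * p x = 0 := by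
    have h := integral_neg_eq_self (fun x => x * (P x ^ 2 - P x) * p x) volume
    have hneg : ∀ x : ℝ, -x * (P (-x) ^ 2 - P (-x)) * p (-x)
        = - (x * (P x ^ 2 - P x) * p x) := by
      intro x
      rw [hPneg, heven]; ring
    simp only [hneg] at h
    rw [integral_neg] at h
    linarith
  have hsub : (∫ x, x * P x ^ 2 * p x) - ∫ x, x * P x * p x = 0 := by
    rw [← integral_sub hi2 hi1', ← hodd]
    congr 1; ext x; ring
  linarith
end

section
/- Let p be an even probability density on ℝ with finite first moment, cdf P, and expected n-sample maximum K_n. Then K_5 = (5/2)·K_4 - (5/2)·K_2. -/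
open MeasureTheory

lemma odd_integral_zero (f : ℝ → ℝ) (hf : ∀ x, f (-x) = - f x) : ∫ x, f x = 0 := by
  have h : ∫ x, f (-x) = ∫ x, f x := integral_neg_eq_self f volume
  have h2 : ∫ x, f (-x) = - ∫ x, f x := by
    simp_rw [hf]; exact integral_neg f
  linarith [h.symm.trans h2]

/-- For any even probability density `p` with finite first moment, the expected maxima satisfy
`K₅ = (5/2) K₄ - (5/2) K₂`, where `K_n = n ∫ x P(x)^{n-1} p(x) dx` and `P` is the cdf of `p`. -/
theorem K5_from_K4_K2_even_density
    (p P : ℝ → ℝ) (hmeas : Measurable p) (hnonneg : ∀ x, 0 ≤ p x)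
    (heven : ∀ x, p (-x) = p x) (hnorm : ∫ x, p x = 1)
    (hmom : Integrable (fun x => x * p x))
    (hP : ∀ x, P x = ∫ t in Set.Iic x, p t) :
    (5 : ℝ) * ∫ x, x * P x ^ 4 * p x =
      5 / 2 * (4 * ∫ x, x * P x ^ 3 * p x) - 5 / 2 * (2 * ∫ x, x * P x * p x) := by
  have hpint : Integrable p := integrable_of_integral_eq_one hnorm
  -- P is monotone, hence measurable
  have hPmono : Monotone P := by
    intro a b hab
    rw [hP a, hP b]
    exact setIntegral_mono_set hpint.integrableOn
      (Filter.Eventually.of_forall hnonneg)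
      (HasSubset.Subset.eventuallyLE (Set.Iic_subset_Iic.2 hab))
  have hPmeas : Measurable P := hPmono.measurable
  -- bounds 0 ≤ P ≤ 1
  have hP0 : ∀ x, 0 ≤ P x := by
    intro x; rw [hP x]
    exact setIntegral_nonneg measurableSet_Iic (fun t _ => hnonneg t)
  have hP1 : ∀ x, P x ≤ 1 := by
    intro x; rw [hP x, ← hnorm]
    exact setIntegral_le_integral hpint (Filter.Eventually.of_forall hnonneg)
  -- reflection: P(-x) = 1 - P x
  have hPneg : ∀ x, P (-x) = 1 - P x := by
    intro x
    have h1 : (∫ t in Set.Iic (-x), p t) = ∫ t in Set.Ioi x, p t := by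
      rw [← integral_comp_neg_Ioi]
      simp_rw [heven]
    have h2 : (∫ t in Set.Iic x, p t) + (∫ t in Set.Ioi x, p t) = 1 := by
      rw [intervalIntegral.integral_Iic_add_Ioi hpint.integrableOn hpint.integrableOn, hnorm]
    rw [hP (-x), hP x] at *
    linarith
  -- integrability of x * f x * p x for bounded measurable f
  have key : ∀ f : ℝ → ℝ, Measurable f → (∀ x, |f x| ≤ 1) →
      Integrable (fun x => x * f x * p x) := by
    intro f hf hb
    refine hmom.mono ?_ ?_
    · exact ((measurable_id.mul hf).mul hmeas).aestronglyMeasurable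
    · refine Filter.Eventually.of_forall fun x => ?_
      simp only [Real.norm_eq_abs, abs_mul]
      have h1 : |x| * |f x| ≤ |x| * 1 :=
        mul_le_mul_of_nonneg_left (hb x) (abs_nonneg x)
      have h2 : 0 ≤ |p x| := abs_nonneg (p x)
      nlinarith
  have habsP : ∀ (k : ℕ), ∀ x, |(P x) ^ k| ≤ 1 := by
    intro k x
    rw [abs_pow]
    exact pow_le_one₀ (abs_nonneg _) (abs_le.2 ⟨by linarith [hP0 x], hP1 x⟩)
  have habsQ : ∀ (k : ℕ), ∀ x, |(P x - 1/2) ^ k| ≤ 1 := by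
    intro k x
    rw [abs_pow]
    refine pow_le_one₀ (abs_nonneg _) (abs_le.2 ⟨by linarith [hP0 x], by linarith [hP1 x]⟩)
  have hIP : ∀ k : ℕ, Integrable (fun x => x * (P x) ^ k * p x) :=
    fun k => key _ (hPmeas.pow_const k) (habsP k)
  have hIQ : ∀ k : ℕ, Integrable (fun x => x * (P x - 1/2) ^ k * p x) :=
    fun k => key _ ((hPmeas.sub measurable_const).pow_const k) (habsQ k)
  set f1 : ℝ → ℝ := fun x => x * (P x - 1/2) ^ 1 * p x with hf1
  set f3 : ℝ → ℝ := fun x => x * (P x - 1/2) ^ 3 * p x with hf3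
  have hIf1 : Integrable f1 := hIQ 1
  have hIf3 : Integrable f3 := hIQ 3
  set A := ∫ x, f3 x with hA
  set B := ∫ x, f1 x with hB
  have hq3 : ∀ x, f3 (-x) = f3 x := by
    intro x; simp only [hf3, hPneg x, heven x]; ring
  have hq1 : ∀ x, f1 (-x) = f1 x := by
    intro x; simp only [hf1, hPneg x, heven x]; ring
  -- generic decomposition lemma
  have decomp : ∀ (n : ℕ) (a b : ℝ),
      (∀ x, (-x) * (1 - P x) ^ n * p x + x * (P x) ^ n * p x
            = 2 * (a * (x * (P x - 1/2) ^ 3 * p x) + b * (x * (P x - 1/2) ^ 1 * p x))) →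
      (∫ x, x * (P x) ^ n * p x) = a * A + b * B := by
    intro n a b hodd
    have hzero : (∫ x, (x * (P x) ^ n * p x - (a * f3 x + b * f1 x))) = 0 := by
      apply odd_integral_zero
      intro x
      simp only [hq3 x, hq1 x, hPneg x, heven x, hf3, hf1]
      have := hodd x
      linarith
    have hS : Integrable (fun x => a * f3 x + b * f1 x) :=
      (hIf3.const_mul a).add (hIf1.const_mul b)
    have heq := integral_sub (hIP n) hS
    rw [hzero] at heq
    have hsum : (∫ x, (a * f3 x + b * f1 x)) = a * A + b * B := by
      rw [integral_add (hIf3.const_mul a) (hIf1.const_mul b),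
        integral_const_mul, integral_const_mul]
    linarith [heq.symm, hsum]
  have h4 : (∫ x, x * (P x) ^ 4 * p x) = 2 * A + (1/2) * B := by
    apply decomp 4 2 (1/2)
    intro x; ring
  have h3 : (∫ x, x * (P x) ^ 3 * p x) = 1 * A + (3/4) * B := by
    apply decomp 3 1 (3/4)
    intro x; ring
  have h1 : (∫ x, x * P x * p x) = 0 * A + 1 * B := by
    have h : (∫ x, x * P x * p x) = ∫ x, x * (P x) ^ 1 * p x := by simp
    rw [h]
    apply decomp 1 0 1
    intro x; ring
  rw [h4, h3, h1]
  ring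
end
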